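/- arXiv:1408.5195 — 3 statements merged into one kernel-verified Lean document; each statement's English description precedes it below -/
import Mathlib

section
/- Let d ≥ 1 and let y = (y_1,…,y_d) ∈ ℝ^d satisfy ∑_{i=1}^d y_i^2 = 1 and ∑_{i=1}^d y_i ≥ √(d−1). Then y_i ≥ 0 for every i = 1,…,d. -/
/-- Let `d ≥ 1` and `y ∈ EuclideanSpace ℝ (Fin d)` with `∑ yᵢ² = 1` and `∑ yᵢ ≥ √(d-1)`.
Then every coordinate of `y` is nonnegative. -/
theorem stmt0 (d : ℕ) (hd : 1 ≤ d) (y : EuclideanSpace ℝ (Fin d))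
    (h1 : ∑ i, (y i) ^ 2 = 1)
    (h2 : Real.sqrt ((d : ℝ) - 1) ≤ ∑ i, y i) :
    ∀ i, 0 ≤ y i := by
  by_contra h
  push_neg at h
  obtain ⟨j, hj⟩ := h
  set s := Finset.univ.erase j with hs
  have hcard : (s.card : ℝ) = (d : ℝ) - 1 := by
    rw [hs, Finset.card_erase_of_mem (Finset.mem_univ j)]
    simp [Nat.cast_sub hd]
  have hsum : ∑ i ∈ s, y i = (∑ i, y i) - y j := by
    rw [hs, Finset.sum_erase_eq_sub (Finset.mem_univ j)]
  have hsumsq : ∑ i ∈ s, (y i) ^ 2 = 1 - (y j) ^ 2 := by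
    rw [hs, Finset.sum_erase_eq_sub (Finset.mem_univ j), h1]
  have hCS : (∑ i ∈ s, y i) ^ 2 ≤ (s.card : ℝ) * ∑ i ∈ s, (y i) ^ 2 := by
    have := sq_sum_le_card_mul_sum_sq (s := s) (f := fun i => y i)
    exact_mod_cast this
  rw [hsum, hsumsq, hcard] at hCS
  have hsq : Real.sqrt ((d : ℝ) - 1) ^ 2 = (d : ℝ) - 1 := by
    rw [Real.sq_sqrt]
    have : (1 : ℝ) ≤ d := by exact_mod_cast hd
    linarith
  have hpos : Real.sqrt ((d : ℝ) - 1) - y j ≤ (∑ i, y i) - y j := by linarith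
  have h0 : 0 ≤ Real.sqrt ((d : ℝ) - 1) - y j := by
    have := Real.sqrt_nonneg ((d : ℝ) - 1)
    linarith
  have hsq2 : (Real.sqrt ((d : ℝ) - 1) - y j) ^ 2 ≤ ((∑ i, y i) - y j) ^ 2 :=
    pow_le_pow_left₀ h0 hpos 2
  have hd1 : (1 : ℝ) ≤ d := by exact_mod_cast hd
  nlinarith [Real.sqrt_nonneg ((d : ℝ) - 1), sq_nonneg (y j), mul_pos (mul_pos (neg_pos.mpr hj) (neg_pos.mpr hj)) (neg_pos.mpr hj)]
end

section
/- Let d ≥ 1, K_0 > 0, K_4 > 0 and δ ∈ (0, 1/5). Let F : ℝ^d × S^d → ℝ satisfy degenerate ellipticity (Γ ≥ Γ′ implies F(p,Γ) ≤ F(p,Γ′)) and the Lipschitz bound |F(p,Γ) − F(p′,Γ′)| ≤ K_0(|p − p′| + ‖Γ − Γ′‖). Then there exist κ > 0, β > 0, C > 0 and h′ ∈ (0,1] such that for all h ∈ (0, h′] and all p_0, p ∈ ℝ^d, Γ_0, Γ ∈ S^d with |p_0|, |p| ≤ K_4 h^{−δ} and ‖Γ_0‖, ‖Γ‖ ≤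 K_4 h^{−δ}, one has inf_{w ∈ ℝ^d, |w| ≤ h^{−κ}} [ √h (p_0 − p)ᵀw + (h/2) wᵀ(Γ_0 − Γ)w − h F(p,Γ) ] ≤ −h F(p_0, Γ_0) + C h^{1+β}. -/
noncomputable section

/-- Euclidean space `ℝ^d`. -/
abbrev Ed (d : ℕ) := EuclideanSpace ℝ (Fin d)

/-- The `ℓ²`-operator norm of a matrix. -/
def opN {d : ℕ} (Γ : Matrix (Fin d) (Fin d) ℝ) : ℝ :=
  ‖Matrix.toEuclideanCLM (𝕜 := ℝ) Γ‖

/-- Euclidean inner product `pᵀ w`. -/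
def dotp {d : ℕ} (p w : Ed d) : ℝ := ∑ i, p i * w i

/-- Quadratic form `wᵀ Γ w`. -/
def quadForm {d : ℕ} (Γ : Matrix (Fin d) (Fin d) ℝ) (w : Ed d) : ℝ :=
  ∑ i, ∑ j, w i * Γ i j * w j

/-- The Hessian matrix `D²φ(x)`. -/
def hess {d : ℕ} (φ : Ed d → ℝ) (x : Ed d) : Matrix (Fin d) (Fin d) ℝ :=
  Matrix.of fun i j =>
    iteratedFDeriv ℝ 2 φ x ![EuclideanSpace.single i 1, EuclideanSpace.single j 1]

/-- First-order partial derivative in direction `i`. -/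
def pDeriv {d : ℕ} (i : Fin d) (φ : Ed d → ℝ) : Ed d → ℝ :=
  fun x => fderiv ℝ φ x (EuclideanSpace.single i 1)

/-- The multiindex partial derivative `D^α φ`. -/
def mDeriv {d : ℕ} (α : Fin d → ℕ) (φ : Ed d → ℝ) : Ed d → ℝ :=
  (((List.finRange d).flatMap fun i => List.replicate (α i) i).foldr pDeriv φ)

/-- The finite set of multiindices `α` with `|α|₁ ≤ k`. -/
def multiIdx (d k : ℕ) : Finset (Fin d → ℕ) :=
  (Fintype.piFinset fun _ : Fin d => Finset.range (k + 1)).filter fun α => ∑ i, α i ≤ k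

/-- `D_{h,δ} = {(p,Γ) ∈ ℝ^d × S^d : |p| ≤ K₄ h^{-δ}, ‖Γ‖ ≤ K₄ h^{-δ}}`. -/
def Dset (d : ℕ) (K4 h δ : ℝ) : Set (Ed d × Matrix (Fin d) (Fin d) ℝ) :=
  {pΓ | pΓ.2.IsSymm ∧ ‖pΓ.1‖ ≤ K4 * h ^ (-δ) ∧ opN pΓ.2 ≤ K4 * h ^ (-δ)}

/-- `X_{h,κ} = {w ∈ ℝ^d : |w| ≤ h^{-κ}}`. -/
def Xset (d : ℕ) (h κ : ℝ) : Set (Ed d) := {w | ‖w‖ ≤ h ^ (-κ)}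

end

/-!
Let `μ ≤ 0` be the minimum of `wᵀ(Γ₀ - Γ)w` over the closed unit ball, so that
`Γ₀ - Γ - μI` is positive semidefinite. Ellipticity and the Lipschitz bound then give
`F(p₀, Γ₀) ≤ F(p₀, Γ + μI) ≤ F(p, Γ) + K₀(|p₀ - p| - μ)`. Both error terms are paid for
by test vectors of length at most `h^{-1/2}`: `w = -2K₀√h (p₀ - p)/|p₀ - p|` makes the
first-order term `-2K₀h|p₀ - p|` at the price `O(h²‖Γ₀ - Γ‖) = O(h^{2-δ})`, and a
minimiser `v` scaled by `±h^{-1/2}` makes the second-order term `μ/2 ≤ 2K₀hμ` once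
`4K₀h ≤ 1`. The infimum lies below the average of the two values. Hence `κ = 1/2` and
`β = 1 - δ`.
-/

open scoped RealInnerProductSpace
open Matrix

section QuadraticForms

variable {d : ℕ}

lemma dotp_eq_inner (p w : Ed d) : dotp p w = ⟪p, w⟫ := by
  simp [dotp, PiLp.inner_apply, mul_comm]

lemma quadForm_eq_inner (M : Matrix (Fin d) (Fin d) ℝ) (w : Ed d) :
    quadForm M w = ⟪w, toEuclideanCLM (𝕜 := ℝ) M w⟫ := by
  simp [quadForm, PiLp.inner_apply, mulVec, dotProduct, Finset.mul_sum, mul_assoc, mul_comm,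
    mul_left_comm]

lemma quadForm_toLp (M : Matrix (Fin d) (Fin d) ℝ) (x : Fin d → ℝ) :
    quadForm M (WithLp.toLp 2 x) = star x ⬝ᵥ (M *ᵥ x) := by
  simp [quadForm, mulVec, dotProduct, Finset.mul_sum, mul_assoc]

lemma quadForm_smul (M : Matrix (Fin d) (Fin d) ℝ) (c : ℝ) (w : Ed d) :
    quadForm M (c • w) = c ^ 2 * quadForm M w := by
  rw [quadForm_eq_inner, quadForm_eq_inner, map_smul, real_inner_smul_left,
    real_inner_smul_right]
  ring

lemma quadForm_neg (M : Matrix (Fin d) (Fin d) ℝ) (w : Ed d) :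
    quadForm M (-w) = quadForm M w := by
  simpa using quadForm_smul M (-1) w

lemma continuous_quadForm (M : Matrix (Fin d) (Fin d) ℝ) : Continuous (quadForm M) := by
  unfold quadForm; fun_prop

lemma continuous_dotp (p : Ed d) : Continuous (dotp p) := by
  unfold dotp; fun_prop

lemma abs_quadForm_le (M : Matrix (Fin d) (Fin d) ℝ) (w : Ed d) :
    |quadForm M w| ≤ opN M * ‖w‖ ^ 2 := by
  rw [quadForm_eq_inner]
  calc |⟪w, toEuclideanCLM (𝕜 := ℝ) M w⟫|
      ≤ ‖w‖ * ‖toEuclideanCLM (𝕜 := ℝ) M w‖ := abs_real_inner_le_norm _ _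
    _ ≤ ‖w‖ * (opN M * ‖w‖) := by gcongr; exact (toEuclideanCLM (𝕜 := ℝ) M).le_opNorm w
    _ = opN M * ‖w‖ ^ 2 := by ring

lemma opN_sub_le (A B : Matrix (Fin d) (Fin d) ℝ) : opN (A - B) ≤ opN A + opN B := by
  unfold opN; rw [map_sub]; exact norm_sub_le _ _

lemma opN_smul_one_le (c : ℝ) : opN (c • (1 : Matrix (Fin d) (Fin d) ℝ)) ≤ |c| := by
  unfold opN
  rw [map_smul, map_one, norm_smul, Real.norm_eq_abs]
  exact mul_le_of_le_one_right (abs_nonneg c) ContinuousLinearMap.norm_id_le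

lemma posSemidef_add_smul_one {M : Matrix (Fin d) (Fin d) ℝ} (hM : M.IsSymm) {c : ℝ}
    (hlow : ∀ y : Ed d, -c * ‖y‖ ^ 2 ≤ quadForm M y) : (M + c • 1).PosSemidef := by
  rw [posSemidef_iff_dotProduct_mulVec]
  refine ⟨isHermitian_iff_isSymm.mpr (hM.add (isSymm_one.smul c)), fun x => ?_⟩
  have hx : star x ⬝ᵥ ((c • (1 : Matrix (Fin d) (Fin d) ℝ)) *ᵥ x) =
      c * ‖WithLp.toLp 2 x‖ ^ 2 := by
    rw [EuclideanSpace.norm_sq_eq]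
    simp [dotProduct, smul_mulVec, Finset.mul_sum, sq, mul_left_comm]
  rw [add_mulVec, dotProduct_add, ← quadForm_toLp, hx]
  linarith [hlow (WithLp.toLp 2 x)]

lemma exists_quadForm_lower_bound (M : Matrix (Fin d) (Fin d) ℝ) :
    ∃ v : Ed d, ‖v‖ ≤ 1 ∧ quadForm M v ≤ 0 ∧ ∀ y, quadForm M v * ‖y‖ ^ 2 ≤ quadForm M y := by
  obtain ⟨v, hv, hmin⟩ := (isCompact_closedBall (0 : Ed d) 1).exists_isMinOn
    (Metric.nonempty_closedBall.mpr zero_le_one) (continuous_quadForm M).continuousOn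
  have hmin' : ∀ y : Ed d, ‖y‖ ≤ 1 → quadForm M v ≤ quadForm M y := fun y hy =>
    hmin (mem_closedBall_zero_iff.mpr hy)
  refine ⟨v, mem_closedBall_zero_iff.mp hv, by simpa [quadForm] using hmin' 0 (by simp),
    fun y => ?_⟩
  rcases eq_or_ne y 0 with rfl | hy
  · simp [quadForm]
  · have hy' : 0 < ‖y‖ := norm_pos_iff.mpr hy
    have := hmin' (‖y‖⁻¹ • y) (by rw [norm_smul, norm_inv, norm_norm, inv_mul_cancel₀ hy'.ne'])
    rw [quadForm_smul, inv_pow] at this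
    rwa [le_inv_mul_iff₀ (by positivity), mul_comm] at this

lemma exists_dotp_eq_neg_mul_norm (q : Ed d) (M : Matrix (Fin d) (Fin d) ℝ) {s : ℝ}
    (hs : 0 ≤ s) :
    ∃ w : Ed d, ‖w‖ ≤ s ∧ dotp q w = -(s * ‖q‖) ∧ quadForm M w ≤ s ^ 2 * opN M := by
  rcases eq_or_ne q 0 with rfl | hq
  · exact ⟨0, by simpa using hs, by simp [dotp], by
      simpa [quadForm, opN] using mul_nonneg (sq_nonneg s) (norm_nonneg _)⟩
  have hq' : 0 < ‖q‖ := norm_pos_iff.mpr hq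
  have hw : ‖(-(s / ‖q‖)) • q‖ = s := by
    rw [norm_smul, norm_neg, Real.norm_eq_abs, abs_div, abs_norm, abs_of_nonneg hs,
      div_mul_cancel₀ _ hq'.ne']
  refine ⟨(-(s / ‖q‖)) • q, hw.le, ?_, ?_⟩
  · rw [dotp_eq_inner, real_inner_smul_right, real_inner_self_eq_norm_sq]
    field_simp
  · calc quadForm M ((-(s / ‖q‖)) • q) ≤ opN M * ‖(-(s / ‖q‖)) • q‖ ^ 2 :=
          (abs_le.mp (abs_quadForm_le _ _)).2
      _ = s ^ 2 * opN M := by rw [hw, mul_comm]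

lemma exists_dotp_nonpos_quadForm_eq (q v : Ed d) (M : Matrix (Fin d) (Fin d) ℝ) (t : ℝ) :
    ∃ w : Ed d, ‖w‖ = |t| * ‖v‖ ∧ dotp q w ≤ 0 ∧ quadForm M w = t ^ 2 * quadForm M v := by
  rcases le_total (dotp q (t • v)) 0 with h | h
  · exact ⟨t • v, by rw [norm_smul, Real.norm_eq_abs], h, quadForm_smul M t v⟩
  · refine ⟨-(t • v), by rw [norm_neg, norm_smul, Real.norm_eq_abs], ?_, ?_⟩
    · rw [dotp_eq_inner, inner_neg_right, ← dotp_eq_inner]; linarith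
    · rw [quadForm_neg, quadForm_smul]

end QuadraticForms

lemma sInf_le_of_norm_le {E : Type*} [NormedAddCommGroup E] [ProperSpace E] {f : E → ℝ}
    (hf : Continuous f) {R : ℝ} {w : E} (hw : ‖w‖ ≤ R) :
    sInf {u | ∃ w : E, ‖w‖ ≤ R ∧ u = f w} ≤ f w := by
  have hS : {u | ∃ w : E, ‖w‖ ≤ R ∧ u = f w} = f '' Metric.closedBall 0 R := by
    ext u; simp [eq_comm]
  rw [hS]
  exact csInf_le ((isCompact_closedBall 0 R).image hf).bddBelow ⟨w, by simpa using hw, rfl⟩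

def DegenerateElliptic {d : ℕ} (F : Ed d → Matrix (Fin d) (Fin d) ℝ → ℝ) : Prop :=
  ∀ (p : Ed d) (Γ Γ' : Matrix (Fin d) (Fin d) ℝ), Γ.IsSymm → Γ'.IsSymm →
    (Γ - Γ').PosSemidef → F p Γ ≤ F p Γ'

def LipschitzWithOpN {d : ℕ} (K0 : ℝ) (F : Ed d → Matrix (Fin d) (Fin d) ℝ → ℝ) : Prop :=
  ∀ (p p' : Ed d) (Γ Γ' : Matrix (Fin d) (Fin d) ℝ), Γ.IsSymm → Γ'.IsSymm →
    |F p Γ - F p' Γ'| ≤ K0 * (‖p - p'‖ + opN (Γ - Γ'))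

lemma le_add_of_posSemidef_add_smul_one {d : ℕ} {K0 : ℝ} {F : Ed d → Matrix (Fin d) (Fin d) ℝ → ℝ}
    (hell : DegenerateElliptic F) (hlip : LipschitzWithOpN K0 F)
    (hK0 : 0 ≤ K0) {p₀ p : Ed d} {Γ₀ Γ : Matrix (Fin d) (Fin d) ℝ} (hΓ₀ : Γ₀.IsSymm)
    (hΓ : Γ.IsSymm) {c : ℝ} (hc : 0 ≤ c) (hpsd : (Γ₀ - Γ + c • 1).PosSemidef) :
    F p₀ Γ₀ ≤ F p Γ + K0 * (‖p₀ - p‖ + c) := by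
  have hΓc : (Γ - c • 1).IsSymm := hΓ.sub (isSymm_one.smul c)
  have hmono : F p₀ Γ₀ ≤ F p₀ (Γ - c • 1) :=
    hell _ _ _ hΓ₀ hΓc (by rwa [sub_sub_eq_add_sub, add_sub_right_comm])
  have hshift : opN (Γ - c • 1 - Γ) ≤ c := by
    simpa [abs_of_nonneg hc] using opN_smul_one_le (d := d) (-c)
  have hF := (abs_le.mp (hlip p₀ p _ _ hΓc hΓ)).2
  have := mul_le_mul_of_nonneg_left hshift hK0
  linarith

lemma sInf_objective_le {d : ℕ} {K0 : ℝ} {F : Ed d → Matrix (Fin d) (Fin d) ℝ → ℝ}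
    (hell : DegenerateElliptic F) (hlip : LipschitzWithOpN K0 F)
    (hK0 : 0 ≤ K0) {h : ℝ} (hh : 0 < h) (hKh : 4 * K0 * h ≤ 1) {p₀ p : Ed d}
    {Γ₀ Γ : Matrix (Fin d) (Fin d) ℝ} (hΓ₀ : Γ₀.IsSymm) (hΓ : Γ.IsSymm) :
    sInf {u | ∃ w : Ed d, ‖w‖ ≤ (Real.sqrt h)⁻¹ ∧ u =
        Real.sqrt h * dotp (p₀ - p) w + (h / 2) * quadForm (Γ₀ - Γ) w - h * F p Γ}
      ≤ -h * F p₀ Γ₀ + K0 ^ 2 * h ^ 2 * opN (Γ₀ - Γ) := by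
  set r := Real.sqrt h
  have hr : 0 < r := Real.sqrt_pos.mpr hh
  have hrh : r ^ 2 = h := Real.sq_sqrt hh.le
  have hobj : Continuous fun w =>
      r * dotp (p₀ - p) w + h / 2 * quadForm (Γ₀ - Γ) w - h * F p Γ := by
    have := continuous_dotp (p₀ - p); have := continuous_quadForm (Γ₀ - Γ); fun_prop
  obtain ⟨v, hv, hμ, hlow⟩ := exists_quadForm_lower_bound (Γ₀ - Γ)
  have hF := le_add_of_posSemidef_add_smul_one (p₀ := p₀) (p := p) hell hlip hK0 hΓ₀ hΓ
    (neg_nonneg.mpr hμ) (posSemidef_add_smul_one (hΓ₀.sub hΓ) fun y => by simpa using hlow y)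
  obtain ⟨w₁, hw₁, hdot₁, hquad₁⟩ :=
    exists_dotp_eq_neg_mul_norm (p₀ - p) (Γ₀ - Γ) (s := 2 * K0 * r) (by positivity)
  obtain ⟨w₂, hw₂, hdot₂, hquad₂⟩ := exists_dotp_nonpos_quadForm_eq (p₀ - p) v (Γ₀ - Γ) r⁻¹
  have hi₁ := sInf_le_of_norm_le hobj (R := r⁻¹) (w := w₁) <| by
    refine hw₁.trans ?_
    rw [← one_div, le_div_iff₀ hr]
    nlinarith
  have hi₂ := sInf_le_of_norm_le hobj (R := r⁻¹) (w := w₂) <| by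
    rw [hw₂, abs_of_pos (inv_pos.mpr hr)]
    exact mul_le_of_le_one_right (inv_pos.mpr hr).le hv
  have hG₁ : r * dotp (p₀ - p) w₁ + h / 2 * quadForm (Γ₀ - Γ) w₁
      ≤ -(2 * K0 * h * ‖p₀ - p‖) + 2 * K0 ^ 2 * h ^ 2 * opN (Γ₀ - Γ) := by
    rw [hdot₁, ← hrh]
    linear_combination (r ^ 2 / 2) * hquad₁
  have hG₂ : r * dotp (p₀ - p) w₂ + h / 2 * quadForm (Γ₀ - Γ) w₂
      ≤ quadForm (Γ₀ - Γ) v / 2 := by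
    have hdot : r * dotp (p₀ - p) w₂ ≤ 0 := mul_nonpos_of_nonneg_of_nonpos hr.le hdot₂
    have hquad : h / 2 * quadForm (Γ₀ - Γ) w₂ = quadForm (Γ₀ - Γ) v / 2 := by
      rw [hquad₂, ← hrh]; field_simp
    linarith
  have hFh := mul_le_mul_of_nonneg_left hF hh.le
  have hμh := mul_le_mul_of_nonpos_right hKh hμ
  linarith

theorem stmt5_general (d : ℕ) (K0 K4 δ : ℝ) (hK0 : 0 < K0) (hK4 : 0 < K4)
    (hδ : δ ∈ Set.Ioo (0 : ℝ) (1 / 5))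
    (F : Ed d → Matrix (Fin d) (Fin d) ℝ → ℝ)
    (hell : ∀ (p : Ed d) (Γ Γ' : Matrix (Fin d) (Fin d) ℝ), Γ.IsSymm → Γ'.IsSymm →
      (Γ - Γ').PosSemidef → F p Γ ≤ F p Γ')
    (hlip : ∀ (p p' : Ed d) (Γ Γ' : Matrix (Fin d) (Fin d) ℝ), Γ.IsSymm → Γ'.IsSymm →
      |F p Γ - F p' Γ'| ≤ K0 * (‖p - p'‖ + opN (Γ - Γ'))) :
    ∃ κ > (0 : ℝ), ∃ β > (0 : ℝ), ∃ C > (0 : ℝ), ∃ h' ∈ Set.Ioc (0 : ℝ) 1,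
      ∀ h ∈ Set.Ioc (0 : ℝ) h', ∀ p₀ p : Ed d, ∀ Γ₀ Γ : Matrix (Fin d) (Fin d) ℝ,
        Γ₀.IsSymm → Γ.IsSymm →
        ‖p₀‖ ≤ K4 * h ^ (-δ) → ‖p‖ ≤ K4 * h ^ (-δ) →
        opN Γ₀ ≤ K4 * h ^ (-δ) → opN Γ ≤ K4 * h ^ (-δ) →
        sInf {u | ∃ w : Ed d, ‖w‖ ≤ h ^ (-κ) ∧ u =
            Real.sqrt h * dotp (p₀ - p) w + (h / 2) * quadForm (Γ₀ - Γ) w - h * F p Γ}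
          ≤ -h * F p₀ Γ₀ + C * h ^ (1 + β) := by
  refine ⟨1 / 2, by norm_num, 1 - δ, by linarith [hδ.2], 2 * K0 ^ 2 * K4, by positivity,
    1 / (4 * K0 + 1), ⟨by positivity, by rw [div_le_one (by positivity)]; linarith⟩, ?_⟩
  rintro h ⟨hh0, hh⟩ p₀ p Γ₀ Γ hΓ₀ hΓ - - hoΓ₀ hoΓ
  have hKh : 4 * K0 * h ≤ 1 := by
    rw [le_div_iff₀ (by positivity)] at hh; linarith
  have hradius : h ^ (-(1 / 2 : ℝ)) = (Real.sqrt h)⁻¹ := by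
    rw [Real.rpow_neg hh0.le, ← Real.sqrt_eq_rpow]
  have hpow : h ^ (1 + (1 - δ)) = h ^ 2 * h ^ (-δ) := by
    rw [show 1 + (1 - δ) = ((2 : ℕ) : ℝ) + -δ by push_cast; ring, Real.rpow_add hh0,
      Real.rpow_natCast]
  have hb : opN (Γ₀ - Γ) ≤ 2 * K4 * h ^ (-δ) := (opN_sub_le _ _).trans (by linarith)
  have hbh := mul_le_mul_of_nonneg_left hb (by positivity : 0 ≤ K0 ^ 2 * h ^ 2)
  rw [hradius, hpow]
  refine (sInf_objective_le hell hlip hK0.le hh0 hKh hΓ₀ hΓ).trans ?_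
  linarith

/-- The key inf inequality behind the consistency of the max–min
representation (part of the proof of Lemma 3.10). -/
theorem stmt5 (d : ℕ) (hd : 1 ≤ d) (K0 K4 δ : ℝ) (hK0 : 0 < K0) (hK4 : 0 < K4)
    (hδ : δ ∈ Set.Ioo (0 : ℝ) (1 / 5))
    (F : Ed d → Matrix (Fin d) (Fin d) ℝ → ℝ)
    (hell : ∀ (p : Ed d) (Γ Γ' : Matrix (Fin d) (Fin d) ℝ), Γ.IsSymm → Γ'.IsSymm →
      (Γ - Γ').PosSemidef → F p Γ ≤ F p Γ')
    (hlip : ∀ (p p' : Ed d) (Γ Γ' : Matrix (Fin d) (Fin d) ℝ), Γ.IsSymm → Γ'.IsSymm →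
      |F p Γ - F p' Γ'| ≤ K0 * (‖p - p'‖ + opN (Γ - Γ'))) :
    ∃ κ > (0 : ℝ), ∃ β > (0 : ℝ), ∃ C > (0 : ℝ), ∃ h' ∈ Set.Ioc (0 : ℝ) 1,
      ∀ h ∈ Set.Ioc (0 : ℝ) h', ∀ p₀ p : Ed d, ∀ Γ₀ Γ : Matrix (Fin d) (Fin d) ℝ,
        Γ₀.IsSymm → Γ.IsSymm →
        ‖p₀‖ ≤ K4 * h ^ (-δ) → ‖p‖ ≤ K4 * h ^ (-δ) →
        opN Γ₀ ≤ K4 * h ^ (-δ) → opN Γ ≤ K4 * h ^ (-δ) →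
        sInf {u | ∃ w : Ed d, ‖w‖ ≤ h ^ (-κ) ∧ u =
            Real.sqrt h * dotp (p₀ - p) w + (h / 2) * quadForm (Γ₀ - Γ) w - h * F p Γ}
          ≤ -h * F p₀ Γ₀ + C * h ^ (1 + β) :=
  stmt5_general d K0 K4 δ hK0 hK4 hδ F hell hlip
end

section
/- Let d ≥ 1, K_4 > 0, h ∈ (0,1], and δ, κ > 0 with 3κ + δ < 1/2. Let φ : ℝ^d → ℝ be a C³ function with ∑_{|α|_1 ≤ 3} sup_{y ∈ ℝ^d} |D^α φ(y)| ≤ K_4 h^{−δ}, and let F : ℝ^d × S^d → ℝ be any function. Then there is a constant C depending only on d such that for every x ∈ ℝ^d, sup_{(p,Γ) ∈ D_{h,δ}} inf_{w ∈ X_{h,κ}} [ φ(x + √h w) − √h wᵀp − (h/2) wᵀΓw − h F(p,Γ) ] ≥ φ(x) − h F(Dφ(x), D²φ(x)) − C K_4 h^{3/2 − 3κ − δ}. -/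
/-! Take `(p, Γ) = (Dφ(x), D²φ(x))`. This pair lies in `D_{h,δ}`: `|Dφ(x)| ≤ ∑ᵢ |∂ᵢφ(x)|`, and by
the Schur test the operator norm of the symmetric Hessian is at most its largest absolute row sum
`∑ⱼ |∂ᵢ∂ⱼφ(x)|`; in both sums the multiindices are pairwise distinct, so they are bounded by
`∑_α sup |D^α φ| ≤ K₄ h^{-δ}`. For this pair the bracket is `φ(x) - hF(Dφ(x), D²φ(x))` plus the
second-order Taylor remainder of `φ` at `x` in the direction `v = √h w`, which is at least
`-sup |D³φ(·)(v,v,v)| / 6 ≥ -d² K₄ h^{-δ} |v|³ / 6`, and `|v|³ ≤ h^{3/2 - 3κ}` on `X_{h,κ}`. -/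

open Finset

variable {d : ℕ}

lemma fderiv_apply_const_apply {E F G : Type*} [NormedAddCommGroup E] [NormedSpace ℝ E]
    [NormedAddCommGroup F] [NormedSpace ℝ F] [NormedAddCommGroup G] [NormedSpace ℝ G]
    {f : E → F →L[ℝ] G} {y : E} (hf : DifferentiableAt ℝ f y) (u : F) (v : E) :
    fderiv ℝ (fun z => f z u) y v = fderiv ℝ f y v u := by
  simp [fderiv_clm_apply hf (differentiableAt_const u)]

lemma pDeriv_pDeriv {ψ : Ed d → ℝ} (hψ : ContDiff ℝ 2 ψ) (i j : Fin d) (y : Ed d) :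
    pDeriv i (pDeriv j ψ) y =
      fderiv ℝ (fderiv ℝ ψ) y (EuclideanSpace.single i 1) (EuclideanSpace.single j 1) :=
  fderiv_apply_const_apply ((hψ.fderiv_right (m := 1) le_rfl).differentiable one_ne_zero y) _ _

lemma pDeriv_comm {ψ : Ed d → ℝ} (hψ : ContDiff ℝ 2 ψ) (i j : Fin d) :
    pDeriv i (pDeriv j ψ) = pDeriv j (pDeriv i ψ) := funext fun y => by
  rw [pDeriv_pDeriv hψ, pDeriv_pDeriv hψ]
  exact hψ.contDiffAt.isSymmSndFDerivAt (by simp) _ _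

lemma contDiff_pDeriv {ψ : Ed d → ℝ} {m : ℕ} (hψ : ContDiff ℝ (m + 1) ψ) (i : Fin d) :
    ContDiff ℝ m (pDeriv i ψ) :=
  (hψ.fderiv_right le_rfl).clm_apply contDiff_const

lemma contDiff_foldr_pDeriv {φ : Ed d → ℝ} {m : ℕ} {l : List (Fin d)}
    (hφ : ContDiff ℝ (m + l.length : ℕ) φ) : ContDiff ℝ m (l.foldr pDeriv φ) := by
  induction l generalizing m with
  | nil => simpa using hφ
  | cons i l ih =>
    refine contDiff_pDeriv (ih ?_) i
    rwa [List.length_cons, ← add_assoc, add_right_comm] at hφ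

lemma foldr_pDeriv_perm {l l' : List (Fin d)} (hl : l.Perm l') {φ : Ed d → ℝ}
    (hφ : ContDiff ℝ l.length φ) : l.foldr pDeriv φ = l'.foldr pDeriv φ := by
  induction hl with
  | nil => rfl
  | cons i _ ih => simp only [List.foldr_cons, ih (hφ.of_le (by simp))]
  | swap i j l =>
    exact pDeriv_comm (contDiff_foldr_pDeriv (m := 2) (by rwa [add_comm])) j i
  | trans h₁ _ ih₁ ih₂ => rw [ih₁ hφ, ih₂ (h₁.length_eq ▸ hφ)]

def multiIdxOf (l : List (Fin d)) : Fin d → ℕ := fun i => l.count i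

lemma perm_flatMap_replicate_count (l : List (Fin d)) :
    ((List.finRange d).flatMap fun i => List.replicate (l.count i) i).Perm l := by
  rw [List.perm_iff_count]
  intro a
  rw [List.count_flatMap, ← Fin.sum_univ_def]
  simp [List.count_replicate]

lemma mDeriv_multiIdxOf {φ : Ed d → ℝ} {l : List (Fin d)} (hφ : ContDiff ℝ l.length φ) :
    mDeriv (multiIdxOf l) φ = l.foldr pDeriv φ :=
  (foldr_pDeriv_perm (perm_flatMap_replicate_count l).symm hφ).symm

lemma sum_multiIdxOf (l : List (Fin d)) : ∑ i, multiIdxOf l i = l.length := by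
  induction l with
  | nil => simp [multiIdxOf]
  | cons a l ih => simp [multiIdxOf, List.count_cons, sum_add_distrib, ← ih]

lemma multiIdxOf_mem_multiIdx {l : List (Fin d)} {k : ℕ} (hl : l.length ≤ k) :
    multiIdxOf l ∈ multiIdx d k := by
  simp only [multiIdx, mem_filter, Fintype.mem_piFinset, mem_range, sum_multiIdxOf]
  exact ⟨fun i => (List.count_le_length.trans hl).trans_lt k.lt_succ_self, hl⟩

lemma multiIdxOf_cons_injective (l : List (Fin d)) :
    Function.Injective fun j => multiIdxOf (j :: l) := by
  intro j j' h
  have := congrFun h j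
  simp only [multiIdxOf, List.count_cons_self, List.count_cons] at this
  by_contra hne
  simp [Ne.symm hne] at this

lemma sum_multiIdxOf_cons_le {M : (Fin d → ℕ) → ℝ} (hM0 : ∀ α ∈ multiIdx d 3, 0 ≤ M α)
    {l : List (Fin d)} (hl : l.length ≤ 2) :
    ∑ j, M (multiIdxOf (j :: l)) ≤ ∑ α ∈ multiIdx d 3, M α := by
  rw [← sum_image fun j _ j' _ h => multiIdxOf_cons_injective l h]
  refine sum_le_sum_of_subset_of_nonneg ?_ fun α hα _ => hM0 α hα
  intro α hα
  obtain ⟨j, -, rfl⟩ := mem_image.1 hα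
  exact multiIdxOf_mem_multiIdx (by simp only [List.length_cons]; omega)

section EuclideanLinearAlgebra

variable {ι : Type*} [Fintype ι] [DecidableEq ι]

lemma clm_apply_eq_sum_single {G : Type*} [NormedAddCommGroup G] [NormedSpace ℝ G]
    (L : EuclideanSpace ℝ ι →L[ℝ] G) (v : EuclideanSpace ℝ ι) :
    L v = ∑ i, v i • L (EuclideanSpace.single i 1) := by
  conv_lhs => rw [← (EuclideanSpace.basisFun ι ℝ).sum_repr v]
  simp

lemma opNorm_le_sum_norm_apply_single {G : Type*} [NormedAddCommGroup G] [NormedSpace ℝ G]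
    (L : EuclideanSpace ℝ ι →L[ℝ] G) : ‖L‖ ≤ ∑ i, ‖L (EuclideanSpace.single i 1)‖ := by
  refine L.opNorm_le_bound (sum_nonneg fun _ _ => norm_nonneg _) fun v => ?_
  rw [clm_apply_eq_sum_single, sum_mul]
  refine (norm_sum_le _ _).trans (sum_le_sum fun i _ => ?_)
  rw [norm_smul, mul_comm]
  gcongr
  exact PiLp.norm_apply_le v i

lemma norm_toEuclideanCLM_le_of_sum_abs_le (A : Matrix ι ι ℝ) {R : ℝ} (hR : 0 ≤ R)
    (hrow : ∀ i, ∑ j, |A i j| ≤ R) (hcol : ∀ j, ∑ i, |A i j| ≤ R) :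
    ‖Matrix.toEuclideanCLM (𝕜 := ℝ) A‖ ≤ R := by
  refine ContinuousLinearMap.opNorm_le_bound _ hR fun w => ?_
  have hrow_sq (i : ι) : (∑ j, A i j * w j) ^ 2 ≤ R * ∑ j, |A i j| * w j ^ 2 :=
    calc (∑ j, A i j * w j) ^ 2 ≤ (∑ j, |A i j| * |w j|) ^ 2 := by
          rw [← sq_abs]
          gcongr
          exact (abs_sum_le_sum_abs _ _).trans_eq (by simp [abs_mul])
      _ ≤ (∑ j, |A i j|) * ∑ j, |A i j| * w j ^ 2 :=
          sum_sq_le_sum_mul_sum_of_sq_le_mul _ (fun _ _ => abs_nonneg _)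
            (fun _ _ => by positivity) (fun j _ => by rw [mul_pow, sq_abs (w j), sq, mul_assoc])
      _ ≤ R * ∑ j, |A i j| * w j ^ 2 := by
          gcongr
          exact hrow i
  refine (pow_le_pow_iff_left₀ (norm_nonneg _) (by positivity) two_ne_zero).1 ?_
  calc ‖Matrix.toEuclideanCLM (𝕜 := ℝ) A w‖ ^ 2 = ∑ i, (∑ j, A i j * w j) ^ 2 := by
        simp [EuclideanSpace.real_norm_sq_eq, Matrix.mulVec, dotProduct]
    _ ≤ ∑ i, R * ∑ j, |A i j| * w j ^ 2 := sum_le_sum fun i _ => hrow_sq i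
    _ = R * ∑ j, (∑ i, |A i j|) * w j ^ 2 := by
        rw [← mul_sum, sum_comm]
        simp only [sum_mul]
    _ ≤ R * ∑ j, R * w j ^ 2 := by
        gcongr with j
        exact hcol j
    _ = (R * ‖w‖) ^ 2 := by
        rw [← mul_sum, mul_pow, EuclideanSpace.real_norm_sq_eq]
        ring

lemma apply_apply_apply_eq_sum
    (T : EuclideanSpace ℝ ι →L[ℝ] EuclideanSpace ℝ ι →L[ℝ] EuclideanSpace ℝ ι →L[ℝ] ℝ)
    (u : EuclideanSpace ℝ ι) :
    T u u u = ∑ k, ∑ j, ∑ i, u i * u j * u k *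
      T (EuclideanSpace.single i 1) (EuclideanSpace.single j 1) (EuclideanSpace.single k 1) := by
  conv_lhs => rw [← (EuclideanSpace.basisFun _ ℝ).sum_repr u]
  simp only [map_sum, map_smul, _root_.sum_apply, smul_apply, EuclideanSpace.basisFun_apply,
    EuclideanSpace.basisFun_repr, smul_eq_mul, mul_sum]
  exact sum_congr rfl fun k _ => sum_congr rfl fun j _ => sum_congr rfl fun i _ => by ring

end EuclideanLinearAlgebra

lemma dotp_gradient (φ : Ed d → ℝ) (x w : Ed d) : dotp w (gradient φ x) = fderiv ℝ φ x w := by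
  rw [← InnerProductSpace.toDual_symm_apply (𝕜 := ℝ) (y := fderiv ℝ φ x), ← gradient,
    PiLp.inner_apply]
  simp [dotp]

lemma quadForm_of_apply_single (B : Ed d →L[ℝ] Ed d →L[ℝ] ℝ) (w : Ed d) :
    quadForm (Matrix.of fun i j => B (EuclideanSpace.single i 1) (EuclideanSpace.single j 1)) w
      = B w w := by
  rw [clm_apply_eq_sum_single B, quadForm]
  simp only [_root_.sum_apply, smul_apply, smul_eq_mul]
  refine sum_congr rfl fun i _ => ?_
  rw [clm_apply_eq_sum_single (B _), mul_sum]
  simp [smul_eq_mul, mul_comm, mul_left_comm]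

lemma abs_taylor_two_le {g g₁ g₂ g₃ : ℝ → ℝ} {B : ℝ}
    (hg : ∀ t, HasDerivAt g (g₁ t) t) (hg₁ : ∀ t, HasDerivAt g₁ (g₂ t) t)
    (hg₂ : ∀ t, HasDerivAt g₂ (g₃ t) t) (hB : ∀ t ∈ Set.Icc (0 : ℝ) 1, |g₃ t| ≤ B) :
    |g 1 - g 0 - g₁ 0 - g₂ 0 / 2| ≤ B / 6 := by
  have fence {f f' b b' : ℝ → ℝ} (hf : ∀ t, HasDerivAt f (f' t) t)
      (hb : ∀ t, HasDerivAt b (b' t) t) (hf0 : f 0 = 0) (hb0 : b 0 = 0)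
      (hbound : ∀ t ∈ Set.Icc (0 : ℝ) 1, |f' t| ≤ b' t) : ∀ t ∈ Set.Icc (0 : ℝ) 1, |f t| ≤ b t :=
    image_norm_le_of_norm_deriv_right_le_deriv_boundary
      (fun t _ => (hf t).continuousAt.continuousWithinAt) (fun t _ => (hf t).hasDerivWithinAt)
      (by simp [hf0, hb0]) hb (fun t ht => hbound t (Set.Ico_subset_Icc_self ht))
  have h₂ : ∀ t ∈ Set.Icc (0 : ℝ) 1, |g₂ t - g₂ 0| ≤ B * t :=
    fence (fun t => (hg₂ t).sub_const _)
      (fun t => ((hasDerivAt_id t).const_mul B).congr_deriv (mul_one B)) (sub_self _)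
      (mul_zero B) hB
  have h₁ : ∀ t ∈ Set.Icc (0 : ℝ) 1, |g₁ t - g₁ 0 - t * g₂ 0| ≤ B * t ^ 2 / 2 :=
    fence (fun t => (((hg₁ t).sub_const _).sub ((hasDerivAt_id t).mul_const _)).congr_deriv
        (by simp))
      (fun t => (((hasDerivAt_pow 2 t).const_mul B).div_const 2).congr_deriv (by ring))
      (by simp) (by simp) h₂
  have h₀ : ∀ t ∈ Set.Icc (0 : ℝ) 1,
      |g t - g 0 - t * g₁ 0 - t ^ 2 / 2 * g₂ 0| ≤ B * t ^ 3 / 6 :=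
    fence (fun t => ((((hg t).sub_const _).sub ((hasDerivAt_id t).mul_const _)).sub
        (((hasDerivAt_pow 2 t).div_const 2).mul_const _)).congr_deriv (by simp))
      (fun t => (((hasDerivAt_pow 3 t).const_mul B).div_const 6).congr_deriv (by ring))
      (by simp) (by simp) h₁
  convert h₀ 1 ⟨zero_le_one, le_rfl⟩ using 2 <;> ring

section TaylorAlongLines

variable {E F : Type*} [NormedAddCommGroup E] [NormedSpace ℝ E] [NormedAddCommGroup F]
  [NormedSpace ℝ F]

lemma hasDerivAt_comp_add_smul {f : E → F} (hf : Differentiable ℝ f) (x v : E) (t : ℝ) :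
    HasDerivAt (fun s : ℝ => f (x + s • v)) (fderiv ℝ f (x + t • v) v) t :=
  (hf _).hasFDerivAt.comp_hasDerivAt t (by simpa using ((hasDerivAt_id t).smul_const v).const_add x)

lemma abs_taylor_two_le_of_contDiff {φ : E → ℝ} (hφ : ContDiff ℝ 3 φ) {B : ℝ}
    (hB : ∀ y u, |fderiv ℝ (fderiv ℝ (fderiv ℝ φ)) y u u u| ≤ B * ‖u‖ ^ 3) (x v : E) :
    |φ (x + v) - φ x - fderiv ℝ φ x v - fderiv ℝ (fderiv ℝ φ) x v v / 2| ≤ B * ‖v‖ ^ 3 / 6 := by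
  have hφ₁ : ContDiff ℝ 2 (fderiv ℝ φ) := hφ.fderiv_right le_rfl
  have hφ₂ : ContDiff ℝ 1 (fderiv ℝ (fderiv ℝ φ)) := hφ₁.fderiv_right le_rfl
  have hg₁ (t : ℝ) : HasDerivAt (fun s : ℝ => fderiv ℝ φ (x + s • v) v)
      (fderiv ℝ (fderiv ℝ φ) (x + t • v) v v) t :=
    (ContinuousLinearMap.apply ℝ ℝ v).hasFDerivAt.comp_hasDerivAt t
      (hasDerivAt_comp_add_smul (hφ₁.differentiable (by simp)) x v t)
  have hg₂ (t : ℝ) : HasDerivAt (fun s : ℝ => fderiv ℝ (fderiv ℝ φ) (x + s • v) v v)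
      (fderiv ℝ (fderiv ℝ (fderiv ℝ φ)) (x + t • v) v v v) t :=
    (((ContinuousLinearMap.apply ℝ ℝ v).comp
      (ContinuousLinearMap.apply ℝ (E →L[ℝ] ℝ) v)).hasFDerivAt.comp_hasDerivAt t
      (hasDerivAt_comp_add_smul (hφ₂.differentiable (by simp)) x v t) :)
  simpa [mul_div_assoc] using abs_taylor_two_le
    (hasDerivAt_comp_add_smul (hφ.differentiable (by simp)) x v) hg₁ hg₂ (fun t _ => hB _ v)

end TaylorAlongLines

section DerivativeBoundsOnEd

variable {φ : Ed d → ℝ} {M : (Fin d → ℕ) → ℝ}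

lemma abs_foldr_pDeriv_le (hφ : ContDiff ℝ 3 φ)
    (hM : ∀ α ∈ multiIdx d 3, ∀ y, |mDeriv α φ y| ≤ M α) {l : List (Fin d)} (hl : l.length ≤ 3)
    (y : Ed d) : |l.foldr pDeriv φ y| ≤ M (multiIdxOf l) := by
  rw [← mDeriv_multiIdxOf (hφ.of_le (by exact_mod_cast hl))]
  exact hM _ (multiIdxOf_mem_multiIdx hl) y

lemma hess_apply (φ : Ed d → ℝ) (x : Ed d) (i j : Fin d) :
    hess φ x i j =
      fderiv ℝ (fderiv ℝ φ) x (EuclideanSpace.single i 1) (EuclideanSpace.single j 1) := by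
  simp [hess, iteratedFDeriv_two_apply]

lemma hess_isSymm (hφ : ContDiff ℝ 2 φ) (x : Ed d) : (hess φ x).IsSymm :=
  Matrix.IsSymm.ext fun i j => by
    rw [hess_apply, hess_apply]
    exact hφ.contDiffAt.isSymmSndFDerivAt (by simp) _ _

lemma quadForm_hess (φ : Ed d → ℝ) (x w : Ed d) :
    quadForm (hess φ x) w = fderiv ℝ (fderiv ℝ φ) x w w := by
  rw [← quadForm_of_apply_single]
  congr 1
  ext i j
  exact hess_apply φ x i j

lemma pDeriv_pDeriv_pDeriv (hφ : ContDiff ℝ 3 φ) (i j k : Fin d) (y : Ed d) :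
    pDeriv i (pDeriv j (pDeriv k φ)) y = fderiv ℝ (fderiv ℝ (fderiv ℝ φ)) y
      (EuclideanSpace.single i 1) (EuclideanSpace.single j 1) (EuclideanSpace.single k 1) := by
  have hφ₂ : Differentiable ℝ (fderiv ℝ (fderiv ℝ φ)) :=
    ((hφ.fderiv_right (m := 2) le_rfl).fderiv_right (m := 1) le_rfl).differentiable one_ne_zero
  have hjk : pDeriv j (pDeriv k φ) = fun z => fderiv ℝ (fderiv ℝ φ) z
      (EuclideanSpace.single j 1) (EuclideanSpace.single k 1) :=
    funext (pDeriv_pDeriv (hφ.of_le (by norm_num)) j k)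
  rw [hjk, pDeriv, fderiv_apply_const_apply ((hφ₂ y).clm_apply (differentiableAt_const _)),
    fderiv_apply_const_apply (hφ₂ y)]

lemma nonneg_of_abs_mDeriv_le (hM : ∀ α ∈ multiIdx d 3, ∀ y, |mDeriv α φ y| ≤ M α) :
    ∀ α ∈ multiIdx d 3, 0 ≤ M α :=
  fun α hα => (abs_nonneg _).trans (hM α hα 0)

lemma norm_gradient_le (hφ : ContDiff ℝ 3 φ)
    (hM : ∀ α ∈ multiIdx d 3, ∀ y, |mDeriv α φ y| ≤ M α) (x : Ed d) :
    ‖gradient φ x‖ ≤ ∑ α ∈ multiIdx d 3, M α := by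
  rw [gradient, LinearIsometryEquiv.norm_map]
  refine (opNorm_le_sum_norm_apply_single _).trans ?_
  refine (sum_le_sum fun i _ => ?_).trans
    (sum_multiIdxOf_cons_le (nonneg_of_abs_mDeriv_le hM) (l := []) (by simp))
  exact abs_foldr_pDeriv_le hφ hM (l := [i]) (by simp) x

lemma opN_hess_le (hφ : ContDiff ℝ 3 φ)
    (hM : ∀ α ∈ multiIdx d 3, ∀ y, |mDeriv α φ y| ≤ M α) (x : Ed d) :
    opN (hess φ x) ≤ ∑ α ∈ multiIdx d 3, M α := by
  have hM0 := nonneg_of_abs_mDeriv_le hM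
  have hentry (i j : Fin d) : |hess φ x i j| ≤ M (multiIdxOf [i, j]) := by
    rw [hess_apply, ← pDeriv_pDeriv (hφ.of_le (by norm_num))]
    exact abs_foldr_pDeriv_le hφ hM (l := [i, j]) (by simp) x
  have hcol (j : Fin d) : ∑ i, |hess φ x i j| ≤ ∑ α ∈ multiIdx d 3, M α :=
    (sum_le_sum fun i _ => hentry i j).trans (sum_multiIdxOf_cons_le hM0 (by simp))
  refine norm_toEuclideanCLM_le_of_sum_abs_le _ (sum_nonneg hM0) (fun i => ?_) hcol
  simpa only [(hess_isSymm (hφ.of_le (by norm_num)) x).apply i] using hcol i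

lemma abs_fderiv3_apply_le (hφ : ContDiff ℝ 3 φ)
    (hM : ∀ α ∈ multiIdx d 3, ∀ y, |mDeriv α φ y| ≤ M α) (y u : Ed d) :
    |fderiv ℝ (fderiv ℝ (fderiv ℝ φ)) y u u u| ≤ d ^ 2 * (∑ α ∈ multiIdx d 3, M α) * ‖u‖ ^ 3 := by
  have hentry (i j k : Fin d) : |u i * u j * u k * fderiv ℝ (fderiv ℝ (fderiv ℝ φ)) y
      (EuclideanSpace.single i 1) (EuclideanSpace.single j 1) (EuclideanSpace.single k 1)|
      ≤ ‖u‖ * ‖u‖ * ‖u‖ * M (multiIdxOf [i, j, k]) := by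
    rw [← pDeriv_pDeriv_pDeriv hφ, abs_mul, abs_mul, abs_mul]
    gcongr
    iterate 3 exact PiLp.norm_apply_le u _
    exact abs_foldr_pDeriv_le hφ hM (l := [i, j, k]) le_rfl y
  rw [apply_apply_apply_eq_sum]
  calc _ ≤ ∑ k : Fin d, ∑ j : Fin d, ∑ i, ‖u‖ * ‖u‖ * ‖u‖ * M (multiIdxOf [i, j, k]) := by
        refine (abs_sum_le_sum_abs _ _).trans (sum_le_sum fun k _ => ?_)
        refine (abs_sum_le_sum_abs _ _).trans (sum_le_sum fun j _ => ?_)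
        exact (abs_sum_le_sum_abs _ _).trans (sum_le_sum fun i _ => hentry i j k)
    _ ≤ ∑ _k : Fin d, ∑ _j : Fin d, ‖u‖ * ‖u‖ * ‖u‖ * ∑ α ∈ multiIdx d 3, M α := by
        gcongr with k _ j _
        rw [← mul_sum]
        gcongr
        exact sum_multiIdxOf_cons_le (nonneg_of_abs_mDeriv_le hM) (by simp)
    _ = _ := by
        simp only [sum_const, card_univ, Fintype.card_fin, nsmul_eq_mul]
        ring

end DerivativeBoundsOnEd

lemma norm_sqrt_smul_pow_three_mul_rpow_le {E : Type*} [NormedAddCommGroup E] [NormedSpace ℝ E]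
    {h κ δ : ℝ} (hh : 0 < h) {w : E} (hw : ‖w‖ ≤ h ^ (-κ)) :
    ‖√h • w‖ ^ 3 * h ^ (-δ) ≤ h ^ ((3 : ℝ) / 2 - 3 * κ - δ) := by
  have hv : ‖√h • w‖ ≤ h ^ ((1 : ℝ) / 2 - κ) := by
    rw [norm_smul, Real.norm_of_nonneg (Real.sqrt_nonneg h), Real.sqrt_eq_rpow, sub_eq_add_neg,
      Real.rpow_add hh]
    gcongr
  calc ‖√h • w‖ ^ 3 * h ^ (-δ) ≤ (h ^ ((1 : ℝ) / 2 - κ)) ^ 3 * h ^ (-δ) := by gcongr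
    _ = h ^ ((3 : ℝ) / 2 - 3 * κ - δ) := by
        rw [← Real.rpow_natCast, ← Real.rpow_mul hh.le, ← Real.rpow_add hh]
        norm_num
        ring_nf

/-- One-sided consistency bound: the max–min quantity dominates
`φ(x) - hF(Dφ(x), D²φ(x)) - C K₄ h^{3/2 - 3κ - δ}` for an arbitrary `F`, with a
constant `C` depending only on `d` (stated in the extended reals so that the
supremum–infimum is always well defined). -/
theorem stmt13 (d : ℕ) (hd : 1 ≤ d) :
    ∃ C > (0 : ℝ), ∀ K4 : ℝ, 0 < K4 → ∀ h ∈ Set.Ioc (0 : ℝ) 1, ∀ δ κ : ℝ,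
      0 < δ → 0 < κ → 3 * κ + δ < 1 / 2 →
      ∀ φ : Ed d → ℝ, ContDiff ℝ 3 φ →
        (∃ M : (Fin d → ℕ) → ℝ,
          (∀ α ∈ multiIdx d 3, ∀ y : Ed d, |mDeriv α φ y| ≤ M α) ∧
          ∑ α ∈ multiIdx d 3, M α ≤ K4 * h ^ (-δ)) →
      ∀ (F : Ed d → Matrix (Fin d) (Fin d) ℝ → ℝ) (x : Ed d),
        ((φ x - h * F (gradient φ x) (hess φ x)
            - C * K4 * h ^ ((3 : ℝ) / 2 - 3 * κ - δ) : ℝ) : EReal)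
          ≤ ⨆ pΓ ∈ Dset d K4 h δ, ⨅ w ∈ Xset d h κ,
              ((φ (x + Real.sqrt h • w) - Real.sqrt h * dotp w pΓ.1 -
                (h / 2) * quadForm pΓ.2 w - h * F pΓ.1 pΓ.2 : ℝ) : EReal) := by
  have hd' : (0 : ℝ) < d := by exact_mod_cast hd
  refine ⟨(d : ℝ) ^ 2 / 6, by positivity, ?_⟩
  rintro K4 hK4 h ⟨hh, -⟩ δ κ - - - φ hφ ⟨M, hM, hMS⟩ F x
  have hmem : (gradient φ x, hess φ x) ∈ Dset d K4 h δ :=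
    ⟨hess_isSymm (hφ.of_le (by norm_num)) x, (norm_gradient_le hφ hM x).trans hMS,
      (opN_hess_le hφ hM x).trans hMS⟩
  refine le_iSup₂_of_le (gradient φ x, hess φ x) hmem
    (le_iInf₂ fun w hw => EReal.coe_le_coe_iff.2 ?_)
  have htaylor := abs_le.1 <| abs_taylor_two_le_of_contDiff hφ (B := d ^ 2 * (K4 * h ^ (-δ)))
    (fun y u => (abs_fderiv3_apply_le hφ hM y u).trans (by gcongr)) x (√h • w)
  have hrem : d ^ 2 * (K4 * h ^ (-δ)) * ‖√h • w‖ ^ 3 / 6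
      ≤ d ^ 2 / 6 * K4 * h ^ ((3 : ℝ) / 2 - 3 * κ - δ) := by
    have := norm_sqrt_smul_pow_three_mul_rpow_le (δ := δ) hh hw
    calc _ = d ^ 2 / 6 * K4 * (‖√h • w‖ ^ 3 * h ^ (-δ)) := by ring
      _ ≤ _ := by gcongr
  simp only [map_smul, smul_apply, smul_eq_mul, ← mul_assoc, Real.mul_self_sqrt hh.le]
    at htaylor
  rw [dotp_gradient, quadForm_hess]
  linarith [htaylor.1]
end
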